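/- Conversely to the previous statement: if G1 and G2 are isomorphic finite graphs on n vertices, then the graph G' = G1' ⊔ G2' (where G_i' adds a universal vertex u_i and pendant leaf v_i to G_i and subdivides all edges once) admits an involutive automorphism f such that e ∩ f(e) = ∅ for every edge e of G'. -/

import Mathlib

open SimpleGraph Finset

/-- `G` together with a new universal vertex `u = Sum.inr false` and a pendant leaf
`v = Sum.inr true` attached to `u`. -/
def augment {V : Type*} (G : SimpleGraph V) : SimpleGraph (V ⊕ Bool) :=
  SimpleGraph.fromRel fun a b =>
    match a, b with
    | Sum.inl x, Sum.inl y => G.Adj x y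
    | Sum.inl _, Sum.inr b => b = false
    | Sum.inr _, Sum.inr _ => True
    | _, _ => False

/-- The subdivision of `H`: every edge is replaced by a path of length 2 through a new
vertex indexed by that edge. -/
def subdiv {W : Type*} (H : SimpleGraph W) : SimpleGraph (W ⊕ H.edgeSet) :=
  SimpleGraph.fromRel fun a b =>
    match a, b with
    | Sum.inl w, Sum.inr e => w ∈ (e : Sym2 W)
    | _, _ => False

/-!
An isomorphism `φ : G₁ ≃g G₂` extends to `augment G₁ ≃g augment G₂` (fixing the two added
vertices) and then to the subdivisions (mapping each subdivision vertex to the one of the image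
edge). Sending the first component of `G'` to the second along this isomorphism and back along
its inverse is an involutive automorphism that exchanges the components. Every edge of `G'` lies
inside one component, so it is disjoint from its image.
-/

theorem SimpleGraph.isLeft_eq_of_sum_adj {α β : Type*} {G : SimpleGraph α} {H : SimpleGraph β}
    {a b : α ⊕ β} (h : (G ⊕g H).Adj a b) : a.isLeft = b.isLeft := by
  cases a <;> cases b <;> simp_all

namespace SimpleGraph.Iso

def augment {V₁ V₂ : Type*} {G₁ : SimpleGraph V₁} {G₂ : SimpleGraph V₂}
    (φ : G₁ ≃g G₂) : _root_.augment G₁ ≃g _root_.augment G₂ where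
  toEquiv := Equiv.sumCongr φ.toEquiv (Equiv.refl Bool)
  map_rel_iff' := by
    intro a b
    cases a <;> cases b <;>
      simp [_root_.augment, fromRel_adj, φ.map_rel_iff]

def subdiv {W₁ W₂ : Type*} {H₁ : SimpleGraph W₁} {H₂ : SimpleGraph W₂}
    (ψ : H₁ ≃g H₂) : _root_.subdiv H₁ ≃g _root_.subdiv H₂ where
  toEquiv := Equiv.sumCongr ψ.toEquiv ψ.mapEdgeSet
  map_rel_iff' := by
    intro a b
    cases a <;> cases b <;> simp [_root_.subdiv, fromRel_adj]

section sumSwap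

variable {α β : Type*} {G : SimpleGraph α} {H : SimpleGraph β} (ι : G ≃g H)

def sumSwap : G ⊕g H ≃g G ⊕g H :=
  (Iso.sumCongr ι ι.symm).trans Iso.sumComm

theorem sumSwap_sumSwap (x : α ⊕ β) : ι.sumSwap (ι.sumSwap x) = x := by
  cases x <;> simp [sumSwap]

theorem isLeft_sumSwap (x : α ⊕ β) : (ι.sumSwap x).isLeft = !x.isLeft := by
  cases x <;> simp [sumSwap]

theorem sumSwap_ne_of_isLeft_eq {x y : α ⊕ β} (h : x.isLeft = y.isLeft) : ι.sumSwap x ≠ y := by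
  intro hxy
  have := ι.isLeft_sumSwap x
  rw [hxy, h] at this
  exact Bool.eq_not_self _ |>.mp this

end sumSwap

end SimpleGraph.Iso

theorem stmt_17_general {V₁ V₂ : Type*}
    (G₁ : SimpleGraph V₁) (G₂ : SimpleGraph V₂)
    (hiso : Nonempty (G₁ ≃g G₂)) :
    ∃ f : (subdiv (augment G₁) ⊕g subdiv (augment G₂)) ≃g
          (subdiv (augment G₁) ⊕g subdiv (augment G₂)),
      (∀ x, f (f x) = x) ∧
      (∀ a b, (subdiv (augment G₁) ⊕g subdiv (augment G₂)).Adj a b →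
        f a ≠ a ∧ f a ≠ b ∧ f b ≠ a ∧ f b ≠ b) := by
  obtain ⟨φ⟩ := hiso
  let ψ := φ.augment.subdiv
  refine ⟨ψ.sumSwap, ψ.sumSwap_sumSwap, fun a b hab => ?_⟩
  have hsame := isLeft_eq_of_sum_adj hab
  exact ⟨ψ.sumSwap_ne_of_isLeft_eq rfl, ψ.sumSwap_ne_of_isLeft_eq hsame,
    ψ.sumSwap_ne_of_isLeft_eq hsame.symm, ψ.sumSwap_ne_of_isLeft_eq rfl⟩

/-- If `G₁` and `G₂` are isomorphic finite graphs on `n` vertices, then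
`G' = subdiv (augment G₁) ⊕g subdiv (augment G₂)` admits an involutive automorphism `f`
mapping every edge to a vertex-disjoint edge. -/
theorem stmt_17 {V₁ V₂ : Type*} [Fintype V₁] [Fintype V₂]
    (G₁ : SimpleGraph V₁) (G₂ : SimpleGraph V₂)
    (hcard : Fintype.card V₁ = Fintype.card V₂)
    (hiso : Nonempty (G₁ ≃g G₂)) :
    ∃ f : (subdiv (augment G₁) ⊕g subdiv (augment G₂)) ≃g
          (subdiv (augment G₁) ⊕g subdiv (augment G₂)),
      (∀ x, f (f x) = x) ∧
      (∀ a b, (subdiv (augment G₁) ⊕g subdiv (augment G₂)).Adj a b →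
        f a ≠ a ∧ f a ≠ b ∧ f b ≠ a ∧ f b ≠ b) :=
  stmt_17_general G₁ G₂ hiso
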